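/- arXiv:2602.15920 — 2 statements merged into one kernel-verified Lean document; each statement's English description precedes it below -/
import Mathlib

section
/- Let G ∈ ℝ^{p×n} and let w, w₀ ∈ ℝⁿ be vectors with strictly positive entries such that G·diag(w₀)·Gᵀ is invertible. Then (G·diag(w)·Gᵀ)⁻¹ ≼ G₀⁻¹ G·diag(w₀)·diag(w)⁻¹·diag(w₀)·Gᵀ G₀⁻¹ in the Loewner order, where G₀ = G·diag(w₀)·Gᵀ, provided G·diag(w)·Gᵀ is also invertible; equality holds when w = w₀. -/
open Matrix

theorem inverse_loewner_majorization {p n : ℕ} (G : Matrix (Fin p) (Fin n) ℝ)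
    (w w₀ : Fin n → ℝ) (hw : ∀ i, 0 < w i) (hw₀ : ∀ i, 0 < w₀ i)
    (h₀ : IsUnit (G * Matrix.diagonal w₀ * Gᵀ))
    (h : IsUnit (G * Matrix.diagonal w * Gᵀ)) :
    ((G * Matrix.diagonal w₀ * Gᵀ)⁻¹ * G * Matrix.diagonal w₀ * (Matrix.diagonal w)⁻¹ *
        Matrix.diagonal w₀ * Gᵀ * (G * Matrix.diagonal w₀ * Gᵀ)⁻¹ -
      (G * Matrix.diagonal w * Gᵀ)⁻¹).PosSemidef ∧
    (G * Matrix.diagonal w₀ * Gᵀ)⁻¹ * G * Matrix.diagonal w₀ * (Matrix.diagonal w₀)⁻¹ *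
        Matrix.diagonal w₀ * Gᵀ * (G * Matrix.diagonal w₀ * Gᵀ)⁻¹ =
      (G * Matrix.diagonal w₀ * Gᵀ)⁻¹ := by
  set D := Matrix.diagonal w with hD
  set D₀ := Matrix.diagonal w₀ with hD₀
  set B := G * D₀ * Gᵀ with hB
  set A := G * D * Gᵀ with hA
  set Din := Matrix.diagonal (fun i => (w i)⁻¹) with hDin
  have hAdet : IsUnit A.det := (Matrix.isUnit_iff_isUnit_det A).mp h
  have hBdet : IsUnit B.det := (Matrix.isUnit_iff_isUnit_det B).mp h₀
  have hDDin : D * Din = 1 := by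
    rw [hD, hDin, Matrix.diagonal_mul_diagonal,
      show (fun i => w i * (w i)⁻¹) = fun _ => (1 : ℝ) from
        funext fun i => mul_inv_cancel₀ (hw i).ne', Matrix.diagonal_one]
  have hDinD : Din * D = 1 := by
    rw [hDin, hD, Matrix.diagonal_mul_diagonal,
      show (fun i => (w i)⁻¹ * w i) = fun _ => (1 : ℝ) from
        funext fun i => inv_mul_cancel₀ (hw i).ne', Matrix.diagonal_one]
  have hDinv : D⁻¹ = Din := Matrix.inv_eq_right_inv hDDin
  have hD₀inv : D₀ * D₀⁻¹ = 1 := by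
    apply Matrix.mul_nonsing_inv
    rw [hD₀, Matrix.det_diagonal]
    exact (Finset.prod_pos fun i _ => hw₀ i).ne'.isUnit
  have h1 : B⁻¹ * G * D₀ * Gᵀ = 1 := by
    rw [Matrix.mul_assoc, Matrix.mul_assoc, ← Matrix.mul_assoc G, ← hB,
      Matrix.nonsing_inv_mul B hBdet]
  have h2 : A⁻¹ * G * D * Gᵀ = 1 := by
    rw [Matrix.mul_assoc, Matrix.mul_assoc, ← Matrix.mul_assoc G, ← hA,
      Matrix.nonsing_inv_mul A hAdet]
  have hb : ∀ M : Matrix (Fin p) (Fin p) ℝ, B⁻¹ * (G * (D₀ * (Gᵀ * M))) = M := by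
    intro M
    simp only [← Matrix.mul_assoc]
    rw [h1, one_mul]
  have ha : ∀ M : Matrix (Fin p) (Fin p) ℝ, A⁻¹ * (G * (D * (Gᵀ * M))) = M := by
    intro M
    simp only [← Matrix.mul_assoc]
    rw [h2, one_mul]
  have hbb : G * (D₀ * (Gᵀ * B⁻¹)) = 1 := by
    simp only [← Matrix.mul_assoc]
    rw [← hB, Matrix.mul_nonsing_inv B hBdet]
  have hd1 : ∀ M : Matrix (Fin n) (Fin p) ℝ, Din * (D * M) = M := by
    intro M; rw [← Matrix.mul_assoc, hDinD, Matrix.one_mul]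
  have hd2 : ∀ M : Matrix (Fin n) (Fin p) ℝ, D * (Din * M) = M := by
    intro M; rw [← Matrix.mul_assoc, hDDin, Matrix.one_mul]
  have hBsym : Bᵀ = B := by
    rw [hB, hD₀]
    simp [Matrix.transpose_mul, Matrix.diagonal_transpose, Matrix.mul_assoc]
  have hAsym : Aᵀ = A := by
    rw [hA, hD]
    simp [Matrix.transpose_mul, Matrix.diagonal_transpose, Matrix.mul_assoc]
  have hBisym : (B⁻¹)ᵀ = B⁻¹ := by rw [Matrix.transpose_nonsing_inv, hBsym]
  have hAisym : (A⁻¹)ᵀ = A⁻¹ := by rw [Matrix.transpose_nonsing_inv, hAsym]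
  constructor
  · -- PSD part
    have key : B⁻¹ * G * D₀ * D⁻¹ * D₀ * Gᵀ * B⁻¹ - A⁻¹
        = (B⁻¹ * G * D₀ - A⁻¹ * G * D) * Din * (B⁻¹ * G * D₀ - A⁻¹ * G * D)ᵀ := by
      have ht : (B⁻¹ * G * D₀ - A⁻¹ * G * D)ᵀ
          = D₀ * (Gᵀ * B⁻¹) - D * (Gᵀ * A⁻¹) := by
        simp only [Matrix.transpose_sub, Matrix.transpose_mul, hBisym, hAisym,
          hD, hD₀, Matrix.diagonal_transpose, Matrix.mul_assoc]
      rw [ht, hDinv]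
      simp only [Matrix.sub_mul, Matrix.mul_sub]
      simp only [Matrix.mul_assoc]
      rw [hd1, hd2, ha, hb, hbb, mul_one]
      abel
    rw [key]
    have hps : Din.PosSemidef := by
      rw [hDin]
      exact Matrix.posSemidef_diagonal_iff.mpr fun i => (inv_nonneg.mpr (hw i).le)
    have := hps.mul_mul_conjTranspose_same (B⁻¹ * G * D₀ - A⁻¹ * G * D)
    simpa using this
  · -- equality part
    rw [Matrix.mul_assoc (B⁻¹ * G) D₀ D₀⁻¹, hD₀inv, Matrix.mul_one, h1, Matrix.one_mul]
end

section
/- Let G ∈ ℝ^{p×n}, w₀ ∈ ℝⁿ with positive entries, G₀ = G·diag(w₀)·Gᵀ invertible, and Q = diag(w₀)·Gᵀ·G₀⁻¹·G·diag(w₀). Then for any w with positive entries and G·diag(w)·Gᵀ invertible, tr(G₀·(G·diag(w)·Gᵀ)⁻¹) ≤ tr(Q·diag(w)⁻¹), with equality at w = w₀. -/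
/-!
With `A = G D₀ Gᵀ`, `B = G D Gᵀ` and `Q = D₀ Gᵀ A⁻¹ G D₀` one has `A = A A⁻¹ A = G Q Gᵀ`, so
`tr (A B⁻¹) = tr (Q · Gᵀ B⁻¹ G)`. The block matrix `[[D⁻¹, Gᵀ], [G, B]]` is positive semidefinite
(its Schur complement with respect to `D⁻¹` vanishes), so its Schur complement with respect to `B`
gives `Gᵀ B⁻¹ G ≤ D⁻¹` in the Loewner order; pairing with `Q ≥ 0` under the trace preserves it.
-/

open Matrix
open scoped MatrixOrder ComplexOrder

namespace Matrix

variable {𝕜 m n : Type*} [RCLike 𝕜] [Fintype m] [Fintype n]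

theorem PosSemidef.trace_mul_nonneg {A B : Matrix n n 𝕜} (hA : A.PosSemidef)
    (hB : B.PosSemidef) : 0 ≤ (A * B).trace := by
  classical
  open scoped Matrix.Norms.L2Operator in
  obtain ⟨C, rfl⟩ := CStarAlgebra.nonneg_iff_eq_star_mul_self.mp hA.nonneg
  rw [star_eq_conjTranspose, Matrix.mul_assoc, trace_mul_comm]
  simpa only [Matrix.mul_assoc] using (hB.mul_mul_conjTranspose_same C).trace_nonneg

theorem trace_mul_le_trace_mul_of_le {Q A B : Matrix n n 𝕜} (hQ : 0 ≤ Q) (hAB : A ≤ B) :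
    (Q * A).trace ≤ (Q * B).trace := by
  have := hQ.posSemidef.trace_mul_nonneg (le_iff.mp hAB)
  rwa [Matrix.mul_sub, trace_sub, sub_nonneg] at this

theorem conjTranspose_mul_inv_mul_le_inv [DecidableEq m] [DecidableEq n] {D : Matrix n n 𝕜}
    (hD : D.PosDef) (G : Matrix m n 𝕜) : Gᴴ * (G * D * Gᴴ)⁻¹ * G ≤ D⁻¹ := by
  by_cases hB : IsUnit (G * D * Gᴴ)
  · have hBpos : (G * D * Gᴴ).PosDef :=
      (hD.posSemidef.mul_mul_conjTranspose_same G).posDef_iff_isUnit.mpr hB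
    have := hD.isUnit.invertible
    have := hBpos.isUnit.invertible
    have hblock : (fromBlocks D⁻¹ Gᴴ Gᴴᴴ (G * D * Gᴴ)).PosSemidef := by
      rw [hD.inv.fromBlocks₁₁, inv_inv_of_invertible, conjTranspose_conjTranspose, sub_self]
      exact .zero
    rw [hBpos.fromBlocks₂₂, conjTranspose_conjTranspose] at hblock
    exact hblock
  · rw [nonsing_inv_apply_not_isUnit _ ((isUnit_iff_isUnit_det _).not.mp hB),
      Matrix.mul_zero, Matrix.zero_mul]
    exact hD.inv.posSemidef.nonneg

theorem trace_mul_inv_le_trace_mul_inv [DecidableEq m] [DecidableEq n] {D₀ D : Matrix n n 𝕜}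
    (hD₀ : D₀.PosSemidef) (hD : D.PosDef) (G : Matrix m n 𝕜) (hA : IsUnit (G * D₀ * Gᴴ)) :
    ((G * D₀ * Gᴴ) * (G * D * Gᴴ)⁻¹).trace ≤
      ((D₀ * Gᴴ * (G * D₀ * Gᴴ)⁻¹ * G * D₀) * D⁻¹).trace := by
  have hQ : 0 ≤ D₀ * Gᴴ * (G * D₀ * Gᴴ)⁻¹ * G * D₀ := by
    have := (hD₀.mul_mul_conjTranspose_same G).inv.conjTranspose_mul_mul_same (G * D₀)
    rw [conjTranspose_mul, hD₀.1.eq] at this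
    simpa only [Matrix.mul_assoc] using this.nonneg
  calc ((G * D₀ * Gᴴ) * (G * D * Gᴴ)⁻¹).trace
      = ((G * D₀ * Gᴴ) * (G * D₀ * Gᴴ)⁻¹ * (G * D₀ * Gᴴ) * (G * D * Gᴴ)⁻¹).trace := by
        rw [mul_nonsing_inv _ ((isUnit_iff_isUnit_det _).mp hA), Matrix.one_mul]
    _ = ((D₀ * Gᴴ * (G * D₀ * Gᴴ)⁻¹ * G * D₀) * (Gᴴ * (G * D * Gᴴ)⁻¹ * G)).trace := by
        simp only [Matrix.mul_assoc]
        rw [trace_mul_comm G]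
        simp only [Matrix.mul_assoc]
    _ ≤ ((D₀ * Gᴴ * (G * D₀ * Gᴴ)⁻¹ * G * D₀) * D⁻¹).trace :=
        trace_mul_le_trace_mul_of_le hQ (conjTranspose_mul_inv_mul_le_inv hD G)

theorem trace_mul_inv_self_eq [DecidableEq m] [DecidableEq n] {D₀ : Matrix n n 𝕜}
    (hD₀ : IsUnit D₀) (G : Matrix m n 𝕜) :
    ((G * D₀ * Gᴴ) * (G * D₀ * Gᴴ)⁻¹).trace =
      ((D₀ * Gᴴ * (G * D₀ * Gᴴ)⁻¹ * G * D₀) * D₀⁻¹).trace := by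
  rw [mul_nonsing_inv_cancel_right _ _ ((isUnit_iff_isUnit_det _).mp hD₀),
    trace_mul_cycle (D₀ * Gᴴ), Matrix.mul_assoc G]

end Matrix

theorem trace_inverse_majorization_general {p n : ℕ} (G : Matrix (Fin p) (Fin n) ℝ)
    (w w₀ : Fin n → ℝ) (hw : ∀ i, 0 < w i) (hw₀ : ∀ i, 0 < w₀ i)
    (h₀ : IsUnit (G * Matrix.diagonal w₀ * Gᵀ)) :
    ((G * Matrix.diagonal w₀ * Gᵀ) * (G * Matrix.diagonal w * Gᵀ)⁻¹).trace ≤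
      ((Matrix.diagonal w₀ * Gᵀ * (G * Matrix.diagonal w₀ * Gᵀ)⁻¹ * G * Matrix.diagonal w₀) *
        (Matrix.diagonal w)⁻¹).trace ∧
    ((G * Matrix.diagonal w₀ * Gᵀ) * (G * Matrix.diagonal w₀ * Gᵀ)⁻¹).trace =
      ((Matrix.diagonal w₀ * Gᵀ * (G * Matrix.diagonal w₀ * Gᵀ)⁻¹ * G * Matrix.diagonal w₀) *
        (Matrix.diagonal w₀)⁻¹).trace := by
  have hD₀ : (diagonal w₀).PosDef := posDef_diagonal_iff.mpr hw₀
  have hD : (diagonal w).PosDef := posDef_diagonal_iff.mpr hw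
  rw [← conjTranspose_eq_transpose_of_trivial] at h₀ ⊢
  exact ⟨trace_mul_inv_le_trace_mul_inv hD₀.posSemidef hD G h₀,
    trace_mul_inv_self_eq hD₀.isUnit G⟩

theorem trace_inverse_majorization {p n : ℕ} (G : Matrix (Fin p) (Fin n) ℝ)
    (w w₀ : Fin n → ℝ) (hw : ∀ i, 0 < w i) (hw₀ : ∀ i, 0 < w₀ i)
    (h₀ : IsUnit (G * Matrix.diagonal w₀ * Gᵀ))
    (h : IsUnit (G * Matrix.diagonal w * Gᵀ)) :
    ((G * Matrix.diagonal w₀ * Gᵀ) * (G * Matrix.diagonal w * Gᵀ)⁻¹).trace ≤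
      ((Matrix.diagonal w₀ * Gᵀ * (G * Matrix.diagonal w₀ * Gᵀ)⁻¹ * G * Matrix.diagonal w₀) *
        (Matrix.diagonal w)⁻¹).trace ∧
    ((G * Matrix.diagonal w₀ * Gᵀ) * (G * Matrix.diagonal w₀ * Gᵀ)⁻¹).trace =
      ((Matrix.diagonal w₀ * Gᵀ * (G * Matrix.diagonal w₀ * Gᵀ)⁻¹ * G * Matrix.diagonal w₀) *
        (Matrix.diagonal w₀)⁻¹).trace :=
  trace_inverse_majorization_general G w w₀ hw hw₀ h₀
end
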